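/- The modified Bell model is non-contextual: there exists a probability distribution q on functions {a,b,c,d} → {0,1} whose pairwise marginals on the four cycle contexts are exactly q|_{ab} = (0, 1/2, 1/2, 0), q|_{bc} = (3/8, 1/8, 1/8, 3/8), q|_{cd} = (3/8, 1/8, 1/8, 3/8), q|_{da} = (1/8, 3/8, 3/8, 1/8), with entries listed in order (0,0),(0,1),(1,0),(1,1). -/

import Mathlib

/-!
Record a global assignment `g` by its value on `a` together with the set of edges of the
4-cycle along which `g` flips; any even set of flipped edges is realised by exactly two
assignments, swapped by the global bit-flip. Giving the flip patterns `{ab, bc}`, `{ab, cd}`,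
`{ab, bc, cd, da}` weight `1/8` and `{ab, da}` weight `5/8`, spread evenly over both
assignments, makes `ab` always flip, `bc` and `cd` flip with probability `1/4` and `da` with
probability `3/4`, with uniform single-site marginals. Scaled by `16`, all weights are natural
numbers, so the marginals are a decidable identity in `ℕ`.
-/

open scoped Classical

/-- Modified Bell model table on the 4-cycle: edge `k` joins measurements `k` and `k+1`;
the context `ab` (edge 0) is perfectly anti-correlated. -/
noncomputable def modBellTable (k : Fin 4) (i j : Bool) : ℝ :=
  if k = 0 then (if i ≠ j then 1/2 else 0)
  else if k = 3 then (if i = j then 1/8 else 3/8)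
  else (if i = j then 3/8 else 1/8)

namespace ModBell

def flipPattern (g : Fin 4 → Bool) : Fin 4 → Bool := fun k => g k != g (k + 1)

/-- Sixteen times the probability of each of the two assignments with flip pattern `p`. -/
def flipCount (p : Fin 4 → Bool) : ℕ :=
  if p = ![true, true, false, false] ∨ p = ![true, false, true, false] ∨
      p = ![true, true, true, true] then 1
  else if p = ![true, false, false, true] then 5
  else 0

def tableCount (k : Fin 4) (i j : Bool) : ℕ :=
  if k = 0 then (if i ≠ j then 8 else 0)
  else if k = 3 then (if i = j then 2 else 6)
  else (if i = j then 6 else 2)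

theorem modBellTable_eq_tableCount_div (k : Fin 4) (i j : Bool) :
    modBellTable k i j = tableCount k i j / 16 := by
  unfold modBellTable tableCount
  split_ifs <;> norm_num

theorem sum_flipCount : ∑ g : Fin 4 → Bool, flipCount (flipPattern g) = 16 := by
  decide

theorem sum_ite_flipCount (k : Fin 4) (i j : Bool) :
    (∑ g : Fin 4 → Bool, if g k = i ∧ g (k + 1) = j then flipCount (flipPattern g) else 0) =
      tableCount k i j := by
  revert k i j
  decide

end ModBell

open ModBell in
theorem stmt_17 :
    ∃ q : (Fin 4 → Bool) → ℝ,
      (∀ g, 0 ≤ q g) ∧ (∑ g : Fin 4 → Bool, q g = 1) ∧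
      ∀ k : Fin 4, ∀ i j : Bool,
        (∑ g : Fin 4 → Bool, if g k = i ∧ g (k + 1) = j then q g else 0) =
          modBellTable k i j := by
  refine ⟨fun g => (flipCount (flipPattern g) : ℝ) / 16, fun g => by positivity, ?_, ?_⟩
  · rw [← Finset.sum_div, ← Nat.cast_sum, sum_flipCount]
    norm_num
  · intro k i j
    rw [modBellTable_eq_tableCount_div, ← sum_ite_flipCount, Nat.cast_sum, Finset.sum_div]
    refine Finset.sum_congr rfl fun g _ => ?_
    split_ifs <;> simp
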